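/- Assume (A1), and fix t ∈ {0,1}; write π_{11} = P(T=1 | R=1). Define the naive influence function φ = (R·1{T=t} / (λ₁·π_{t1}))·(Y − ν_t) and the candidate projection g = (−1)^{t+1}·(R·(T − π_{11}) / (λ₁·π_{t1}))·(τ_t(1,X) − ν_t). Then φ − g is orthogonal in L²(P) to the subspace { R·(T − π_{11})·h(X) : h bounded measurable }, i.e., for every bounded measurable h : 𝒳 → ℝ, E[ (φ − g)·R·(T − π_{11})·h(X) ] = 0; since g itself lies in (the L²-closure of) this subspace, g is the orthogonal projection of φ onto it. -/

import Mathlib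

open MeasureTheory ProbabilityTheory Set

noncomputable section

/-- The σ-algebra on `Ω` generated by the map `X`. -/
def sigmaX {Ω 𝒳 : Type*} [MeasurableSpace 𝒳] (X : Ω → 𝒳) : MeasurableSpace Ω :=
  MeasurableSpace.comap X inferInstance

/-- Conditional expectation of `f` given the σ-algebra `m'` under the measure `μ`. -/
def cexp {Ω : Type*} (m' : MeasurableSpace Ω) {m0 : MeasurableSpace Ω} (μ : Measure Ω)
    (f : Ω → ℝ) : Ω → ℝ :=
  MeasureTheory.condExp m' μ f

/-- Conditional probability of the event `s` given the σ-algebra `m'`, as a function. -/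
def cprob {Ω : Type*} (m' : MeasurableSpace Ω) {m0 : MeasurableSpace Ω} (μ : Measure Ω)
    (s : Set Ω) : Ω → ℝ :=
  cexp m' μ (s.indicator fun _ => (1 : ℝ))

/-- `f` and `g` are conditionally independent given the σ-algebra `m'` under `μ` :
conditional probabilities of joint events factorize. -/
def CondIndepFunGiven {Ω β γ : Type*} [MeasurableSpace β]
    [MeasurableSpace γ] (m' : MeasurableSpace Ω) {m0 : MeasurableSpace Ω}
    (f : Ω → β) (g : Ω → γ) (μ : Measure Ω) : Prop :=
  ∀ s u, MeasurableSet s → MeasurableSet u →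
    cprob m' μ (f ⁻¹' s ∩ g ⁻¹' u)
      =ᵐ[μ] fun ω => cprob m' μ (f ⁻¹' s) ω * cprob m' μ (g ⁻¹' u) ω

/-!
Everything vanishes off `{R = 1}`, so the integral is `λ₁` times an integral under `P[|R = 1]`,
where `T` is independent of `(Y_t, X)`. Since `Y = Y_t` on `{T = t}` and, for `T ∈ {0,1}`,
`1{T = t} - (±1) (T - π₁₁)` is a constant `c`, the integrand splits as
`1{T = t} (T - π₁₁) · h(X) (Y_t - E[Y_t | X])` plus `c (T - π₁₁) · h(X) (E[Y_t | X] - ν_t)`.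
Both terms are products of independent factors, the first centred by the tower property and the
second because `E[T] = π₁₁`. By Doob–Dynkin, `E[Y_t | X]` is a measurable function of `X`, which
also exhibits `g` as an element of the subspace.
-/

section

variable {Ω 𝒳 : Type*} {m₀ : MeasurableSpace Ω} [MeasurableSpace 𝒳] {μ : Measure Ω}

theorem MeasureTheory.Integrable.cond {f : Ω → ℝ} {s : Set Ω} (hf : Integrable f μ)
    (hs : μ s ≠ 0) : Integrable f μ[|s] :=
  hf.restrict.smul_measure (ENNReal.inv_ne_top.2 hs)

theorem integral_eq_measureReal_mul_integral_cond [IsFiniteMeasure μ] {s : Set Ω} {f : Ω → ℝ}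
    (hf : ∀ ω ∉ s, f ω = 0) :
    ∫ ω, f ω ∂μ = μ.real s * ∫ ω, f ω ∂μ[|s] := by
  rw [ProbabilityTheory.cond, integral_smul_measure,
    setIntegral_eq_integral_of_forall_compl_eq_zero hf, ENNReal.toReal_inv, smul_eq_mul,
    ← mul_assoc]
  by_cases hs : μ s = 0
  · rw [← setIntegral_eq_integral_of_forall_compl_eq_zero hf, Measure.restrict_eq_zero.2 hs,
      integral_zero_measure, mul_zero]
  · rw [Measure.real, mul_inv_cancel₀ (ENNReal.toReal_ne_zero.2 ⟨hs, measure_ne_top μ s⟩),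
      one_mul]

theorem integral_mul_sub_condExp_eq_zero {m : MeasurableSpace Ω} (hm : m ≤ m₀)
    [SigmaFinite (μ.trim hm)] {f g : Ω → ℝ} {C : ℝ} (hf : StronglyMeasurable[m] f)
    (hfC : ∀ ω, |f ω| ≤ C) (hg : Integrable g μ) :
    ∫ ω, f ω * (g ω - μ[g|m] ω) ∂μ = 0 := by
  have hf_bdd : ∀ᵐ ω ∂μ, ‖f ω‖ ≤ C := .of_forall hfC
  have hfg : Integrable (f * g) μ := hg.bdd_mul (hf.mono hm).aestronglyMeasurable hf_bdd
  have hfm : Integrable (f * μ[g|m]) μ :=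
    integrable_condExp.bdd_mul (hf.mono hm).aestronglyMeasurable hf_bdd
  calc ∫ ω, f ω * (g ω - μ[g|m] ω) ∂μ = ∫ ω, (f * g) ω ∂μ - ∫ ω, (f * μ[g|m]) ω ∂μ := by
        rw [← integral_sub hfg hfm]; simp only [Pi.mul_apply, mul_sub]
    _ = 0 := by
        rw [← integral_condExp hm,
          integral_congr_ae (condExp_mul_of_stronglyMeasurable_left hf hfg hg), sub_self]

theorem integral_mul_comp_mul_sub_condExp_eq_zero [IsProbabilityMeasure μ]
    {X : Ω → 𝒳} {U A : Ω → ℝ} {h : 𝒳 → ℝ} {C : ℝ} (hX : Measurable X)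
    (hUAX : IndepFun U (fun ω => (A ω, X ω)) μ) (hU : AEStronglyMeasurable U μ)
    (hA : Integrable A μ) (hh : Measurable h) (hC : ∀ x, |h x| ≤ C) :
    ∫ ω, U ω * (h (X ω) * (A ω - μ[A|MeasurableSpace.comap X inferInstance] ω)) ∂μ = 0 := by
  obtain ⟨g, hg, hgX⟩ := (stronglyMeasurable_condExp (m := MeasurableSpace.comap X inferInstance)
    (μ := μ) (f := A)).exists_eq_measurable_comp
  have hUW : IndepFun U
      (fun ω => h (X ω) * (A ω - μ[A|MeasurableSpace.comap X inferInstance] ω)) μ := by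
    rw [hgX]
    exact hUAX.comp measurable_id ((hh.comp measurable_snd).mul
      (measurable_fst.sub (hg.measurable.comp measurable_snd)))
  have hW : AEStronglyMeasurable
      (fun ω => h (X ω) * (A ω - μ[A|MeasurableSpace.comap X inferInstance] ω)) μ :=
    (hh.comp hX).aestronglyMeasurable.mul
      (hA.aestronglyMeasurable.sub integrable_condExp.aestronglyMeasurable)
  have hW0 : ∫ ω, h (X ω) * (A ω - μ[A|MeasurableSpace.comap X inferInstance] ω) ∂μ = 0 :=
    integral_mul_sub_condExp_eq_zero hX.comap_le
      (hh.comp (comap_measurable X)).stronglyMeasurable (fun ω => hC (X ω)) hA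
  exact (hUW.integral_mul_eq_mul_integral hU hW).trans (by rw [hW0, mul_zero])

section Binary

variable {T : Ω → ℝ}

theorem ite_sub_sign_mul_sub_eq {x t : ℝ} (hx : x = 0 ∨ x = 1) (ht : t = 0 ∨ t = 1) (π : ℝ) :
    (if x = t then 1 else 0) - (if t = 1 then 1 else -1) * (x - π)
      = if t = 1 then π else 1 - π := by
  rcases hx with rfl | rfl <;> rcases ht with rfl | rfl <;> norm_num

theorem MeasureTheory.Integrable.comp_zero_or_one_mul {W : Ω → ℝ} {φ : ℝ → ℝ} (hW : Integrable W μ)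
    (hT : Measurable T) (hTbin : ∀ ω, T ω = 0 ∨ T ω = 1) (hφ : Measurable φ) :
    Integrable (fun ω => φ (T ω) * W ω) μ :=
  hW.bdd_mul (hφ.comp hT).aestronglyMeasurable (c := |φ 0| + |φ 1|) <| .of_forall fun ω => by
    rcases hTbin ω with h | h <;> simp [h]

theorem integral_sub_measureReal_mul_comp_eq_zero [IsProbabilityMeasure μ] {X : Ω → 𝒳}
    {k : 𝒳 → ℝ} (hT : Measurable T) (hTbin : ∀ ω, T ω = 0 ∨ T ω = 1) (hX : Measurable X)
    (hTX : IndepFun T X μ) (hk : Measurable k) :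
    ∫ ω, (T ω - μ.real {ω | T ω = 1}) * k (X ω) ∂μ = 0 := by
  have hT_int : Integrable T μ := .of_bound hT.aestronglyMeasurable 1 <| .of_forall fun ω => by
    rcases hTbin ω with h | h <;> simp [h]
  have hT_mean : ∫ ω, (T ω - μ.real {ω | T ω = 1}) ∂μ = 0 := by
    rw [integral_sub hT_int (integrable_const _),
      integral_of_ae_eq_zero_or_one hT.aemeasurable (.of_forall hTbin), integral_const,
      probReal_univ, one_smul, sub_self]
  have hTk : IndepFun (fun ω => T ω - μ.real {ω | T ω = 1}) (fun ω => k (X ω)) μ :=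
    hTX.comp (φ := fun x => x - μ.real {ω | T ω = 1}) (by fun_prop) hk
  exact (hTk.integral_mul_eq_mul_integral (by fun_prop) (hk.comp hX).aestronglyMeasurable).trans
    (by rw [hT_mean, zero_mul])

theorem integral_influence_sub_projection_mul_eq_zero [IsProbabilityMeasure μ]
    {X : Ω → 𝒳} {A Y : Ω → ℝ} {h : 𝒳 → ℝ} {t ν C : ℝ}
    (hX : Measurable X) (hT : Measurable T) (hTbin : ∀ ω, T ω = 0 ∨ T ω = 1)
    (ht : t = 0 ∨ t = 1) (hTAX : IndepFun T (fun ω => (A ω, X ω)) μ) (hA : Integrable A μ)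
    (hYA : ∀ ω, T ω = t → Y ω = A ω) (hh : Measurable h) (hC : ∀ x, |h x| ≤ C) :
    ∫ ω, ((if T ω = t then 1 else 0) * (Y ω - ν)
        - (if t = 1 then 1 else -1) * (T ω - μ.real {ω | T ω = 1})
          * (μ[A|MeasurableSpace.comap X inferInstance] ω - ν))
      * ((T ω - μ.real {ω | T ω = 1}) * h (X ω)) ∂μ = 0 := by
  set π₁ := μ.real {ω | T ω = 1}
  set m := μ[A|MeasurableSpace.comap X inferInstance]
  obtain ⟨g, hg, hgX⟩ := (stronglyMeasurable_condExp (m := MeasurableSpace.comap X inferInstance)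
    (μ := μ) (f := A)).exists_eq_measurable_comp
  set U : ℝ → ℝ := fun x => (if x = t then 1 else 0) * (x - π₁)
  set c := if t = 1 then π₁ else 1 - π₁
  have hsplit : ∀ ω, ((if T ω = t then 1 else 0) * (Y ω - ν)
        - (if t = 1 then 1 else -1) * (T ω - π₁) * (m ω - ν)) * ((T ω - π₁) * h (X ω))
      = U (T ω) * (h (X ω) * (A ω - m ω)) + c * ((T ω - π₁) * (h (X ω) * (g (X ω) - ν))) := by
    intro ω
    have hYA' : (if T ω = t then 1 else 0) * Y ω = (if T ω = t then 1 else 0) * A ω := by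
      split_ifs with hTt
      · rw [hYA ω hTt]
      · simp only [zero_mul]
    rw [show g (X ω) = m ω from (congrFun hgX ω).symm]
    linear_combination ((T ω - π₁) * h (X ω)) * hYA'
      + ((T ω - π₁) * h (X ω) * (m ω - ν)) * ite_sub_sign_mul_sub_eq (hTbin ω) ht π₁
  have hU : Measurable U :=
    (Measurable.ite measurableSet_eq measurable_const measurable_const).mul
      (measurable_id.sub measurable_const)
  have hW_int : Integrable (fun ω => h (X ω) * (A ω - m ω)) μ :=
    (hA.sub integrable_condExp).bdd_mul (hh.comp hX).aestronglyMeasurable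
      (.of_forall fun ω => hC (X ω))
  have hV_int : Integrable (fun ω => h (X ω) * (g (X ω) - ν)) μ :=
    ((hgX ▸ integrable_condExp : Integrable (g ∘ X) μ).sub (integrable_const ν)).bdd_mul
      (hh.comp hX).aestronglyMeasurable (.of_forall fun ω => hC (X ω))
  have hfirst : ∫ ω, U (T ω) * (h (X ω) * (A ω - m ω)) ∂μ = 0 :=
    integral_mul_comp_mul_sub_condExp_eq_zero hX (hTAX.comp hU measurable_id)
      (hU.comp hT).aestronglyMeasurable hA hh hC
  have hsecond : ∫ ω, (T ω - π₁) * (h (X ω) * (g (X ω) - ν)) ∂μ = 0 :=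
    integral_sub_measureReal_mul_comp_eq_zero hT hTbin hX (hTAX.comp measurable_id measurable_snd)
      (hh.mul (hg.measurable.sub measurable_const))
  rw [integral_congr_ae (.of_forall hsplit),
    integral_add (hW_int.comp_zero_or_one_mul hT hTbin hU)
      ((hV_int.comp_zero_or_one_mul hT hTbin (φ := (· - π₁)) (by fun_prop)).const_mul c),
    integral_const_mul, hfirst, hsecond, mul_zero, zero_add]

end Binary

theorem ProbabilityTheory.IndepFun.select_potentialOutcome {T Y₁ Y₀ : Ω → ℝ} {X : Ω → 𝒳}
    {Yt : ℝ → Ω → ℝ} {t : ℝ} (hTYX : IndepFun T (fun ω => (Y₁ ω, Y₀ ω, X ω)) μ)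
    (hYt1 : Yt 1 = Y₁) (hYt0 : Yt 0 = Y₀) (ht : t = 0 ∨ t = 1) :
    IndepFun T (fun ω => (Yt t ω, X ω)) μ := by
  rcases ht with rfl | rfl
  · rw [hYt0]; exact hTYX.comp (ψ := fun p => (p.2.1, p.2.2)) measurable_id (by fun_prop)
  · rw [hYt1]; exact hTYX.comp (ψ := fun p => (p.1, p.2.2)) measurable_id (by fun_prop)

end

theorem stmt18_general
    {Ω 𝒳 : Type*} [MeasurableSpace Ω] [MeasurableSpace 𝒳]
    (P : Measure Ω) [IsProbabilityMeasure P]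
    (X : Ω → 𝒳) (R T Y₁ Y₀ Y : Ω → ℝ) (Yt : ℝ → Ω → ℝ)
    (hX : Measurable X) (hR : Measurable R) (hT : Measurable T)
    (hRbin : ∀ ω, R ω = 0 ∨ R ω = 1) (hTbin : ∀ ω, T ω = 0 ∨ T ω = 1)
    (hY₁2 : MemLp Y₁ 2 P) (hY₀2 : MemLp Y₀ 2 P)
    (hY : Y = fun ω => T ω * Y₁ ω + (1 - T ω) * Y₀ ω)
    (hYt1 : Yt 1 = Y₁) (hYt0 : Yt 0 = Y₀)
    (hlam_pos : 0 < P {ω | R ω = 1})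
    (hA1 : IndepFun T (fun ω => (Y₁ ω, Y₀ ω, X ω)) (ProbabilityTheory.cond P {ω | R ω = 1}))
    (t : ℝ) (ht : t = 0 ∨ t = 1)
    :
    (∀ h : 𝒳 → ℝ, Measurable h → (∃ C, ∀ x, |h x| ≤ C) →
      ∫ ω, ((R ω * (if T ω = t then (1 : ℝ) else 0) / ((P {ω' | R ω' = 1}).toReal * ((ProbabilityTheory.cond P {ω' | R ω' = 1}) {ω' | T ω' = t}).toReal)) * (Y ω - (∫ ω', Yt t ω' ∂(ProbabilityTheory.cond P {ω'' | R ω'' = 1})))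
        - (if t = 1 then (1 : ℝ) else -1) * (R ω * (T ω - ((ProbabilityTheory.cond P {ω' | R ω' = 1}) {ω' | T ω' = 1}).toReal) / ((P {ω' | R ω' = 1}).toReal * ((ProbabilityTheory.cond P {ω' | R ω' = 1}) {ω' | T ω' = t}).toReal)) * (cexp (sigmaX X) (ProbabilityTheory.cond P {ω' | R ω' = 1}) (Yt t) ω - (∫ ω', Yt t ω' ∂(ProbabilityTheory.cond P {ω'' | R ω'' = 1}))))
        * (R ω * (T ω - ((ProbabilityTheory.cond P {ω' | R ω' = 1}) {ω' | T ω' = 1}).toReal) * h (X ω)) ∂P = 0) ∧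
    (∃ h : 𝒳 → ℝ, Measurable h ∧
      (fun ω => (if t = 1 then (1 : ℝ) else -1) * (R ω * (T ω - ((ProbabilityTheory.cond P {ω' | R ω' = 1}) {ω' | T ω' = 1}).toReal) / ((P {ω' | R ω' = 1}).toReal * ((ProbabilityTheory.cond P {ω' | R ω' = 1}) {ω' | T ω' = t}).toReal)) * (cexp (sigmaX X) (ProbabilityTheory.cond P {ω' | R ω' = 1}) (Yt t) ω - (∫ ω', Yt t ω' ∂(ProbabilityTheory.cond P {ω'' | R ω'' = 1}))))
        =ᵐ[P] fun ω => R ω * (T ω - ((ProbabilityTheory.cond P {ω' | R ω' = 1}) {ω' | T ω' = 1}).toReal) * h (X ω)) := by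
  set μ₁ := ProbabilityTheory.cond P {ω | R ω = 1}
  have : IsProbabilityMeasure μ₁ := cond_isProbabilityMeasure hlam_pos.ne'
  have hA : Integrable (Yt t) μ₁ := by
    have hYt2 : MemLp (Yt t) 2 P := by rcases ht with rfl | rfl <;> simpa [hYt0, hYt1]
    exact (hYt2.integrable one_le_two).cond hlam_pos.ne'
  have hYA : ∀ ω, T ω = t → Y ω = Yt t ω := by
    rintro ω rfl
    rcases hTbin ω with hT0 | hT1
    · simp [hY, hT0, hYt0]
    · simp [hY, hT1, hYt1]
  obtain ⟨g, hg, hgX⟩ := (stronglyMeasurable_condExp (m := sigmaX X) (μ := μ₁)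
    (f := Yt t)).exists_eq_measurable_comp
  set κ := (P {ω | R ω = 1}).toReal * (μ₁ {ω | T ω = t}).toReal
  set ν := ∫ ω, Yt t ω ∂μ₁
  refine ⟨fun h hh ⟨C, hC⟩ => ?_, fun x => (if t = 1 then 1 else -1) * ((g x - ν) / κ),
    by fun_prop, .of_forall fun ω => ?_⟩
  · have hG := integral_influence_sub_projection_mul_eq_zero (ν := ν) hX hT hTbin ht
      (hA1.select_potentialOutcome hYt1 hYt0 ht) hA hYA hh hC
    rw [integral_eq_measureReal_mul_integral_cond fun ω hω => by
      rw [(hRbin ω).resolve_right hω]; ring]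
    have hκG := (integral_const_mul κ⁻¹ _).trans ((congrArg (κ⁻¹ * ·) hG).trans (mul_zero _))
    refine mul_eq_zero_of_right _ ((integral_congr_ae ?_).trans hκG)
    filter_upwards [ae_cond_mem (hR (measurableSet_singleton 1))] with ω hω
    rw [show R ω = 1 from hω, cexp, sigmaX, measureReal_def]
    ring
  · simp only [show cexp (sigmaX X) μ₁ (Yt t) = g ∘ X from hgX, Function.comp_apply]
    ring

theorem stmt18
    {Ω 𝒳 : Type*} [MeasurableSpace Ω] [MeasurableSpace 𝒳] [StandardBorelSpace 𝒳]
    (P : Measure Ω) [IsProbabilityMeasure P]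
    (X : Ω → 𝒳) (R T Y₁ Y₀ Y : Ω → ℝ) (Yt : ℝ → Ω → ℝ)
    (hX : Measurable X) (hR : Measurable R) (hT : Measurable T)
    (hY₁m : Measurable Y₁) (hY₀m : Measurable Y₀)
    (hRbin : ∀ ω, R ω = 0 ∨ R ω = 1) (hTbin : ∀ ω, T ω = 0 ∨ T ω = 1)
    (hY₁2 : MemLp Y₁ 2 P) (hY₀2 : MemLp Y₀ 2 P)
    (hY : Y = fun ω => T ω * Y₁ ω + (1 - T ω) * Y₀ ω)
    (hYt1 : Yt 1 = Y₁) (hYt0 : Yt 0 = Y₀)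
    (ε : ℝ) (hε : 0 < ε)
    (hlam_pos : 0 < P {ω | R ω = 1}) (hlam_lt : P {ω | R ω = 1} < 1)
    (hlamX : ∀ᵐ ω ∂P, ε ≤ cprob (sigmaX X) P {ω' | R ω' = 1} ω ∧
      cprob (sigmaX X) P {ω' | R ω' = 1} ω ≤ 1 - ε)
    (hpi : ∀ r ∈ ({0, 1} : Set ℝ), ∀ t ∈ ({0, 1} : Set ℝ), ∀ᵐ ω ∂P,
      ε ≤ cprob (sigmaX X) (ProbabilityTheory.cond P {ω' | R ω' = r}) {ω' | T ω' = t} ω ∧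
      cprob (sigmaX X) (ProbabilityTheory.cond P {ω' | R ω' = r}) {ω' | T ω' = t} ω ≤ 1 - ε)
    (hA1 : IndepFun T (fun ω => (Y₁ ω, Y₀ ω, X ω)) (ProbabilityTheory.cond P {ω | R ω = 1}))
    (t : ℝ) (ht : t = 0 ∨ t = 1)
    :
    (∀ h : 𝒳 → ℝ, Measurable h → (∃ C, ∀ x, |h x| ≤ C) →
      ∫ ω, ((R ω * (if T ω = t then (1 : ℝ) else 0) / ((P {ω' | R ω' = 1}).toReal * ((ProbabilityTheory.cond P {ω' | R ω' = 1}) {ω' | T ω' = t}).toReal)) * (Y ω - (∫ ω', Yt t ω' ∂(ProbabilityTheory.cond P {ω'' | R ω'' = 1})))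
        - (if t = 1 then (1 : ℝ) else -1) * (R ω * (T ω - ((ProbabilityTheory.cond P {ω' | R ω' = 1}) {ω' | T ω' = 1}).toReal) / ((P {ω' | R ω' = 1}).toReal * ((ProbabilityTheory.cond P {ω' | R ω' = 1}) {ω' | T ω' = t}).toReal)) * (cexp (sigmaX X) (ProbabilityTheory.cond P {ω' | R ω' = 1}) (Yt t) ω - (∫ ω', Yt t ω' ∂(ProbabilityTheory.cond P {ω'' | R ω'' = 1}))))
        * (R ω * (T ω - ((ProbabilityTheory.cond P {ω' | R ω' = 1}) {ω' | T ω' = 1}).toReal) * h (X ω)) ∂P = 0) ∧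
    (∃ h : 𝒳 → ℝ, Measurable h ∧
      (fun ω => (if t = 1 then (1 : ℝ) else -1) * (R ω * (T ω - ((ProbabilityTheory.cond P {ω' | R ω' = 1}) {ω' | T ω' = 1}).toReal) / ((P {ω' | R ω' = 1}).toReal * ((ProbabilityTheory.cond P {ω' | R ω' = 1}) {ω' | T ω' = t}).toReal)) * (cexp (sigmaX X) (ProbabilityTheory.cond P {ω' | R ω' = 1}) (Yt t) ω - (∫ ω', Yt t ω' ∂(ProbabilityTheory.cond P {ω'' | R ω'' = 1}))))
        =ᵐ[P] fun ω => R ω * (T ω - ((ProbabilityTheory.cond P {ω' | R ω' = 1}) {ω' | T ω' = 1}).toReal) * h (X ω)) :=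
  stmt18_general P X R T Y₁ Y₀ Y Yt hX hR hT hRbin hTbin hY₁2 hY₀2 hY hYt1 hYt0 hlam_pos hA1 t ht
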